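/- For every nonnegative integer ν, every A ≥ 0, every c > 1, and every integer k ≥ 2, there is a constant C = C(ν, A, k, c) > 0 such that for all real T ≥ 2 and 1 ≤ M ≤ T and all t ∈ ℝ, the ν-th derivative of the restriction of h^♯ to ℝ satisfies |(h^♯)^{(ν)}(t)| ≤ C · M^{−ν} · ((1 + |t−T|/M)^{−A} + (1 + |t+T|/M)^{−A}). -/

import Mathlib

/-! Put `s = T + M u`. Then `(s² + 1/4)/(T² + 1/4) = 1 + b u + a u²` with `a = M²/(T² + 1/4) ≤ 1`
and `b = 2TM/(T² + 1/4) ≤ 2` (as `M ≤ T`), so `h^♯(s) = g_{a,b}((s - T)/M) + g_{a,-b}((s + T)/M)`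
where `g_{a,b}(u) = (1 + b u + a u²) Φ_{k,c}(u)`. Every derivative of `P(u) Φ_{k,c}(u)`, `P` a
polynomial, is `Q(u) Φ_{k,c}(u)` with `Q` depending linearly on `P`, and `|Φ_{k,c}(u)| =
exp(-(u/c)^{2k})` beats every power of `1 + |u|`. As `a` and `b` stay bounded, the resulting
constant is uniform in `T` and `M`; the rescaling `u = (s ∓ T)/M` contributes `M^{-ν}`. -/

/-- `Φ_{k,c}(z) := exp(−(z/c)^{2k})`. -/
noncomputable def Phi (k : ℕ) (c : ℝ) (z : ℂ) : ℂ :=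
  Complex.exp (-((z / (c : ℂ)) ^ (2 * k)))

/-- The almost-flat window
`h^♯(z) = ((z² + 1/4)/(T² + 1/4)) · (Φ_{k,c}((z−T)/M) + Φ_{k,c}((z+T)/M))`. -/
noncomputable def hSharp (T M c : ℝ) (k : ℕ) (z : ℂ) : ℂ :=
  ((z ^ 2 + 1 / 4) / ((T : ℂ) ^ 2 + 1 / 4)) *
    (Phi k c ((z - (T : ℂ)) / (M : ℂ)) + Phi k c ((z + (T : ℂ)) / (M : ℂ)))

open Polynomial
open scoped Nat

section PolyTimesPhi

variable (k : ℕ) (c : ℝ)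

/-- `P ↦ P' + P · Φ'/Φ`, so that `(P Φ)' = (phiDeriv P) Φ`. -/
noncomputable def phiDeriv : ℂ[X] →ₗ[ℂ] ℂ[X] :=
  derivative + LinearMap.mulRight ℂ (C (-(2 * k : ℂ) / (c : ℂ) ^ (2 * k)) * X ^ (2 * k - 1))

noncomputable def phiMul (P : ℂ[X]) (u : ℝ) : ℂ :=
  P.eval (u : ℂ) * Phi k c u

variable {k c}

lemma hasDerivAt_Phi (hk : k ≠ 0) (hc : c ≠ 0) (z : ℂ) :
    HasDerivAt (Phi k c) (-(2 * k : ℂ) / (c : ℂ) ^ (2 * k) * z ^ (2 * k - 1) * Phi k c z) z := by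
  have hc' : (c : ℂ) ≠ 0 := by exact_mod_cast hc
  have hpow : HasDerivAt (fun z : ℂ => (z / c) ^ (2 * k))
      ((2 * k : ℕ) * (z / c) ^ (2 * k - 1) * (1 / c)) z :=
    (hasDerivAt_pow (2 * k) (z / c)).comp z ((hasDerivAt_id z).div_const (c : ℂ))
  refine HasDerivAt.congr_deriv (f := Phi k c) hpow.neg.cexp ?_
  have hexp : (c : ℂ) ^ (2 * k) = (c : ℂ) ^ (2 * k - 1) * c := by
    rw [← pow_succ, Nat.sub_add_cancel (by omega)]
  simp only [Pi.neg_apply, Phi, div_pow, hexp]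
  push_cast
  field_simp

lemma hasDerivAt_phiMul (hk : k ≠ 0) (hc : c ≠ 0) (P : ℂ[X]) (u : ℝ) :
    HasDerivAt (phiMul k c P) (phiMul k c (phiDeriv k c P) u) u := by
  have hP := (P.hasDerivAt (u : ℂ)).comp_ofReal
  have hPhi := (hasDerivAt_Phi hk hc (u : ℂ)).comp_ofReal
  refine HasDerivAt.congr_deriv (f := phiMul k c P) (hP.mul hPhi) ?_
  simp only [phiMul, phiDeriv, LinearMap.add_apply, LinearMap.mulRight_apply, eval_add,
    eval_mul, eval_C, eval_pow, eval_X, derivative_apply]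
  ring

lemma iteratedDeriv_phiMul (hk : k ≠ 0) (hc : c ≠ 0) (n : ℕ) (P : ℂ[X]) :
    iteratedDeriv n (phiMul k c P) = phiMul k c ((phiDeriv k c ^ n) P) := by
  induction n generalizing P with
  | zero => simp
  | succ n ih =>
    rw [iteratedDeriv_succ', funext fun u => (hasDerivAt_phiMul hk hc P u).deriv, ih,
      pow_succ, Module.End.mul_apply]

lemma contDiff_phiMul (P : ℂ[X]) {n : WithTop ℕ∞} : ContDiff ℝ n (phiMul k c P) := by
  have hP : ContDiff ℂ n fun z : ℂ => P.eval z := by simpa using P.contDiff_aeval (𝕜 := ℂ) n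
  have hPhi : ContDiff ℂ n (Phi k c) :=
    Complex.contDiff_exp.comp ((contDiff_id.div_const _).pow _).neg
  exact ((hP.mul hPhi).restrict_scalars ℝ).comp Complex.ofRealCLM.contDiff

end PolyTimesPhi

lemma norm_Phi_ofReal (k : ℕ) (c u : ℝ) : ‖Phi k c u‖ = Real.exp (-(u / c) ^ (2 * k)) := by
  rw [Phi, Complex.norm_exp, ← Complex.ofReal_div, ← Complex.ofReal_pow, ← Complex.ofReal_neg,
    Complex.ofReal_re]

lemma norm_eval_le_mul_one_add_abs_pow (Q : ℂ[X]) (x : ℝ) :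
    ‖Q.eval (x : ℂ)‖ ≤
      (∑ i ∈ Finset.range (Q.natDegree + 1), ‖Q.coeff i‖) * (1 + |x|) ^ Q.natDegree := by
  rw [eval_eq_sum_range, Finset.sum_mul]
  refine (norm_sum_le _ _).trans (Finset.sum_le_sum fun i hi => ?_)
  rw [norm_mul, norm_pow, Complex.norm_real, Real.norm_eq_abs]
  gcongr
  calc |x| ^ i ≤ (1 + |x|) ^ i := by gcongr; linarith
    _ ≤ (1 + |x|) ^ Q.natDegree :=
      pow_le_pow_right₀ (by linarith [abs_nonneg x]) (Nat.lt_succ_iff.mp (Finset.mem_range.mp hi))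

lemma one_add_abs_pow_le_mul_exp {k : ℕ} (hk : k ≠ 0) {c : ℝ} (hc : 0 < c) (N : ℕ) (x : ℝ) :
    (1 + |x|) ^ N ≤ (1 + c) ^ N * N ! * Real.exp 2 * Real.exp ((x / c) ^ (2 * k)) := by
  set s := |x| / c
  have hs : 0 ≤ s := by positivity
  have hy : (x / c) ^ (2 * k) = s ^ (2 * k) := by
    rw [← (even_two_mul k).pow_abs, abs_div, abs_of_pos hc]
  have hxs : 1 + |x| ≤ (1 + c) * (1 + s) := by
    have : c * s = |x| := mul_div_cancel₀ _ hc.ne'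
    nlinarith
  have hsy : 1 + s ≤ 2 + s ^ (2 * k) := by
    rcases le_total s 1 with h | h
    · linarith [pow_nonneg hs (2 * k)]
    · linarith [le_self_pow₀ h (by omega : 2 * k ≠ 0)]
  have hexp : (2 + s ^ (2 * k)) ^ N ≤ N ! * Real.exp (2 + s ^ (2 * k)) := by
    have := Real.pow_div_factorial_le_exp (2 + s ^ (2 * k)) (by positivity) N
    rwa [div_le_iff₀ (by positivity), mul_comm (Real.exp _)] at this
  calc (1 + |x|) ^ N ≤ ((1 + c) * (2 + s ^ (2 * k))) ^ N := by
        gcongr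
        exact hxs.trans (by gcongr)
    _ ≤ (1 + c) ^ N * (N ! * Real.exp (2 + s ^ (2 * k))) := by
        rw [mul_pow]; gcongr
    _ = _ := by rw [hy, Real.exp_add]; ring

lemma norm_phiMul_le {k : ℕ} (hk : k ≠ 0) {c : ℝ} (hc : 0 < c) (P : ℂ[X]) (A : ℝ) :
    ∃ C, 0 < C ∧ ∀ u : ℝ, ‖phiMul k c P u‖ ≤ C * (1 + |u|) ^ (-A) := by
  set B := ∑ i ∈ Finset.range (P.natDegree + 1), ‖P.coeff i‖
  set N := P.natDegree + ⌈A⌉₊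
  refine ⟨(B + 1) * ((1 + c) ^ N * N ! * Real.exp 2), by positivity, fun u => ?_⟩
  have hu : 1 ≤ 1 + |u| := by linarith [abs_nonneg u]
  have hA : (1 + |u|) ^ A ≤ (1 + |u|) ^ ⌈A⌉₊ := by
    rw [← Real.rpow_natCast]
    exact Real.rpow_le_rpow_of_exponent_le hu (Nat.le_ceil A)
  have hP : ‖P.eval (u : ℂ)‖ ≤ (B + 1) * (1 + |u|) ^ P.natDegree :=
    (norm_eval_le_mul_one_add_abs_pow P u).trans (by gcongr; linarith)
  rw [phiMul, norm_mul, norm_Phi_ofReal, Real.exp_neg, Real.rpow_neg (by positivity),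
    ← div_eq_mul_inv, ← div_eq_mul_inv, div_le_div_iff₀ (Real.exp_pos _) (by positivity)]
  calc ‖P.eval (u : ℂ)‖ * (1 + |u|) ^ A ≤ (B + 1) * (1 + |u|) ^ P.natDegree * (1 + |u|) ^ ⌈A⌉₊ := by
        gcongr
    _ = (B + 1) * (1 + |u|) ^ N := by rw [pow_add]; ring
    _ ≤ _ := by
        rw [mul_assoc]
        gcongr
        exact one_add_abs_pow_le_mul_exp hk hc N u

lemma norm_iteratedDeriv_phiMul_quadratic_le {k : ℕ} (hk : k ≠ 0) {c : ℝ} (hc : 0 < c)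
    (n : ℕ) (A R : ℝ) :
    ∃ K, 0 < K ∧ ∀ a b : ℂ, ‖a‖ ≤ R → ‖b‖ ≤ R → ∀ u : ℝ,
      ‖iteratedDeriv n (phiMul k c (1 + C b * X + C a * X ^ 2)) u‖ ≤ K * (1 + |u|) ^ (-A) := by
  obtain ⟨K₀, hK₀, h₀⟩ := norm_phiMul_le hk hc ((phiDeriv k c ^ n) 1) A
  obtain ⟨K₁, hK₁, h₁⟩ := norm_phiMul_le hk hc ((phiDeriv k c ^ n) X) A
  obtain ⟨K₂, hK₂, h₂⟩ := norm_phiMul_le hk hc ((phiDeriv k c ^ n) (X ^ 2)) A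
  refine ⟨K₀ + |R| * (K₁ + K₂), by positivity, fun a b ha hb u => ?_⟩
  have hsplit : iteratedDeriv n (phiMul k c (1 + C b * X + C a * X ^ 2)) u =
      phiMul k c ((phiDeriv k c ^ n) 1) u + b * phiMul k c ((phiDeriv k c ^ n) X) u +
        a * phiMul k c ((phiDeriv k c ^ n) (X ^ 2)) u := by
    simp only [iteratedDeriv_phiMul hk hc.ne', ← smul_eq_C_mul, map_add, map_smul, phiMul,
      eval_add, eval_smul, smul_eq_mul]
    ring
  have hR : ‖a‖ ≤ |R| ∧ ‖b‖ ≤ |R| := ⟨ha.trans (le_abs_self R), hb.trans (le_abs_self R)⟩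
  rw [hsplit]
  calc _ ≤ ‖phiMul k c ((phiDeriv k c ^ n) 1) u‖ + ‖b‖ * ‖phiMul k c ((phiDeriv k c ^ n) X) u‖ +
        ‖a‖ * ‖phiMul k c ((phiDeriv k c ^ n) (X ^ 2)) u‖ := by
        rw [← norm_mul, ← norm_mul]
        exact norm_add₃_le
    _ ≤ K₀ * (1 + |u|) ^ (-A) + |R| * (K₁ * (1 + |u|) ^ (-A)) +
        |R| * (K₂ * (1 + |u|) ^ (-A)) := by
        gcongr
        exacts [h₀ u, hR.2, h₁ u, hR.1, h₂ u]
    _ = _ := by ring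

lemma iteratedDeriv_comp_sub_div {𝕜 F : Type*} [NontriviallyNormedField 𝕜] [NormedAddCommGroup F]
    [NormedSpace 𝕜 F] {g : 𝕜 → F} {n : ℕ} (hg : ContDiff 𝕜 n g) (s₀ M t : 𝕜) :
    iteratedDeriv n (fun s => g ((s - s₀) / M)) t = M⁻¹ ^ n • iteratedDeriv n g ((t - s₀) / M) := by
  simp only [div_eq_inv_mul]
  rw [iteratedDeriv_comp_sub_const (f := fun x => g (M⁻¹ * x)), iteratedDeriv_comp_const_smul hg]

lemma iteratedDeriv_comp_sub_div_add_comp_add_div {𝕜 F : Type*} [NontriviallyNormedField 𝕜]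
    [NormedAddCommGroup F] [NormedSpace 𝕜 F] {g h : 𝕜 → F} {n : ℕ} (hg : ContDiff 𝕜 n g)
    (hh : ContDiff 𝕜 n h) (T M t : 𝕜) :
    iteratedDeriv n (fun s => g ((s - T) / M) + h ((s + T) / M)) t =
      M⁻¹ ^ n • (iteratedDeriv n g ((t - T) / M) + iteratedDeriv n h ((t + T) / M)) := by
  have hg' : ContDiff 𝕜 n fun s => g ((s - T) / M) := hg.comp (by fun_prop)
  have hh' : ContDiff 𝕜 n fun s => h ((s + T) / M) := hh.comp (by fun_prop)
  have hshift : iteratedDeriv n (fun s => h ((s + T) / M)) t =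
      M⁻¹ ^ n • iteratedDeriv n h ((t + T) / M) := by
    simpa only [sub_neg_eq_add] using iteratedDeriv_comp_sub_div hh (-T) M t
  rw [iteratedDeriv_fun_add hg'.contDiffAt hh'.contDiffAt, iteratedDeriv_comp_sub_div hg, hshift,
    smul_add]

lemma hSharp_ofReal_eq {T M a b c : ℝ} {k : ℕ} (hM : M ≠ 0) (ha : a * (T ^ 2 + 1 / 4) = M ^ 2)
    (hb : b * (T ^ 2 + 1 / 4) = 2 * T * M) :
    (fun s : ℝ => hSharp T M c k s) = fun s =>
      phiMul k c (1 + C (b : ℂ) * X + C (a : ℂ) * X ^ 2) ((s - T) / M) +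
        phiMul k c (1 + C (-b : ℂ) * X + C (a : ℂ) * X ^ 2) ((s + T) / M) := by
  have hM' : (M : ℂ) ≠ 0 := by exact_mod_cast hM
  have hcast : ((T ^ 2 + 1 / 4 : ℝ) : ℂ) = (T : ℂ) ^ 2 + 1 / 4 := by push_cast; ring
  have hT : (T : ℂ) ^ 2 + 1 / 4 ≠ 0 := by
    rw [← hcast]; exact_mod_cast (by positivity : T ^ 2 + 1 / 4 ≠ 0)
  have ha' : (a : ℂ) * ((T : ℂ) ^ 2 + 1 / 4) = (M : ℂ) ^ 2 := by rw [← hcast]; exact_mod_cast ha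
  have hb' : (b : ℂ) * ((T : ℂ) ^ 2 + 1 / 4) = 2 * T * M := by rw [← hcast]; exact_mod_cast hb
  funext s
  simp only [hSharp, phiMul, eval_add, eval_mul, eval_C, eval_X, eval_pow, eval_one]
  push_cast
  rw [mul_add]
  congr 2
  · have hu : (M : ℂ) * ((s - T) / M) = s - T := mul_div_cancel₀ _ hM'
    rw [div_eq_iff hT]
    linear_combination -((s - T) / M) * hb' - ((s - T) / M) ^ 2 * ha' -
      (s + T + M * ((s - T) / M)) * hu
  · have hu : (M : ℂ) * ((s + T) / M) = s + T := mul_div_cancel₀ _ hM'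
    rw [div_eq_iff hT]
    linear_combination ((s + T) / M) * hb' - ((s + T) / M) ^ 2 * ha' -
      (s - T + M * ((s + T) / M)) * hu

lemma exists_hSharp_ofReal_eq {T M c : ℝ} {k : ℕ} (hM : 0 < M) (hMT : M ≤ T) :
    ∃ a b : ℂ, ‖a‖ ≤ 1 ∧ ‖b‖ ≤ 2 ∧ (fun s : ℝ => hSharp T M c k s) = fun s =>
      phiMul k c (1 + C b * X + C a * X ^ 2) ((s - T) / M) +
        phiMul k c (1 + C (-b) * X + C a * X ^ 2) ((s + T) / M) := by
  have hD : 0 < T ^ 2 + 1 / 4 := by positivity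
  have hT : 0 < T := hM.trans_le hMT
  refine ⟨(M ^ 2 / (T ^ 2 + 1 / 4) : ℝ), (2 * T * M / (T ^ 2 + 1 / 4) : ℝ), ?_, ?_,
    hSharp_ofReal_eq hM.ne' (div_mul_cancel₀ _ hD.ne') (div_mul_cancel₀ _ hD.ne')⟩ <;>
  · rw [Complex.norm_real, Real.norm_of_nonneg (by positivity), div_le_iff₀ hD]
    nlinarith

/-- For every `ν ∈ ℕ`, `A ≥ 0`, `c > 1`, integer `k ≥ 2`, there is
`C = C(ν, A, k, c) > 0` such that for all `T ≥ 2`, `1 ≤ M ≤ T`, `t ∈ ℝ`: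
`|(h^♯)^{(ν)}(t)| ≤ C · M^{−ν} · ((1+|t−T|/M)^{−A} + (1+|t+T|/M)^{−A})`. -/
theorem stmt_13 :
    ∀ (ν : ℕ) (A : ℝ), 0 ≤ A → ∀ c : ℝ, 1 < c → ∀ k : ℕ, 2 ≤ k →
      ∃ C : ℝ, 0 < C ∧
        ∀ T M t : ℝ, 2 ≤ T → 1 ≤ M → M ≤ T →
          ‖iteratedDeriv ν (fun s : ℝ => hSharp T M c k (s : ℂ)) t‖ ≤
            C * M ^ (-(ν : ℝ)) *
              ((1 + |t - T| / M) ^ (-A) + (1 + |t + T| / M) ^ (-A)) := by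
  intro ν A _ c hc k hk
  obtain ⟨K, hK, hbound⟩ :=
    norm_iteratedDeriv_phiMul_quadratic_le (by omega : k ≠ 0) (by linarith : 0 < c) ν A 2
  refine ⟨K, hK, fun T M t _ hM hMT => ?_⟩
  have hM₀ : 0 < M := by linarith
  obtain ⟨a, b, ha, hb, hsharp⟩ := exists_hSharp_ofReal_eq (c := c) (k := k) hM₀ hMT
  rw [hsharp, iteratedDeriv_comp_sub_div_add_comp_add_div (contDiff_phiMul _) (contDiff_phiMul _),
    norm_smul, Real.norm_of_nonneg (by positivity), Real.rpow_neg hM₀.le, Real.rpow_natCast,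
    inv_pow, mul_comm K, mul_assoc, mul_add]
  gcongr
  refine (norm_add_le _ _).trans (add_le_add ?_ ?_)
  · simpa only [abs_div, abs_of_pos hM₀] using
      hbound _ _ (ha.trans one_le_two) hb ((t - T) / M)
  · simpa only [abs_div, abs_of_pos hM₀] using
      hbound _ _ (ha.trans one_le_two) ((norm_neg b).trans_le hb) ((t + T) / M)
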